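/- Let Π be finite with sink V ⊆ Π, F faulty with |F| ≤ f and |V \ F| ≥ 2f + 1. With Algorithm 2 slices (sink members: all ⌈(|V|+f+1)/2⌉-subsets of V; non-sink members: all (f+1)-subsets of V, where each non-sink member's slices may be restricted to subsets containing at least f+1 correct sink members as guaranteed by the sink detector), every process (sink or non-sink) has a quorum consisting entirely of correct processes. -/

import Mathlib

/-! The correct sink members `V \ F` form a quorum: they are at least `(|V| + f + 1) / 2` many,
since `|V| ≤ |V \ F| + f` and `|V \ F| ≥ 2f + 1`, so each of them has a threshold slice inside
`V \ F`. Every correct process has a slice inside `V \ F` (a non-sink one by the sink detector),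
so adding it to `V \ F` keeps the quorum property. -/

/-- A set `Q` is a quorum if every member has some slice contained in `Q`. -/
def IsQuorum {α : Type*} (slices : α → Finset (Finset α)) (Q : Finset α) : Prop :=
  ∀ i ∈ Q, ∃ S ∈ slices i, S ⊆ Q

namespace IsQuorum

variable {α : Type*} [DecidableEq α] {slices : α → Finset (Finset α)}

theorem insert {Q : Finset α} {i : α} (hQ : IsQuorum slices Q)
    (hi : ∃ S ∈ slices i, S ⊆ Q) : IsQuorum slices (insert i Q) := by
  intro j hj
  rcases Finset.mem_insert.1 hj with rfl | hjQ
  · obtain ⟨S, hS, hSQ⟩ := hi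
    exact ⟨S, hS, hSQ.trans (Finset.subset_insert _ _)⟩
  · obtain ⟨S, hS, hSQ⟩ := hQ j hjQ
    exact ⟨S, hS, hSQ.trans (Finset.subset_insert _ _)⟩

end IsQuorum

theorem isQuorum_of_forall_slices_eq_powersetCard {α : Type*} {slices : α → Finset (Finset α)}
    {C V : Finset α} {k : ℕ} (hCV : C ⊆ V) (hk : k ≤ C.card)
    (hslices : ∀ j ∈ C, slices j = Finset.powersetCard k V) : IsQuorum slices C := by
  intro j hj
  obtain ⟨T, hTC, hTcard⟩ := Finset.exists_subset_card_eq hk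
  exact ⟨T, hslices j hj ▸ Finset.mem_powersetCard.2 ⟨hTC.trans hCV, hTcard⟩, hTC⟩

theorem threshold_le_card_sdiff {α : Type*} [DecidableEq α] {V F : Finset α} {f : ℕ}
    (hF : F.card ≤ f) (hcorrect : 2 * f + 1 ≤ (V \ F).card) :
    (V.card + f + 1 + 1) / 2 ≤ (V \ F).card := by
  have hV : V.card ≤ (V \ F).card + F.card := Finset.card_le_card_sdiff_add_card
  omega

theorem stmt_9_general {α : Type*} [DecidableEq α] (f : ℕ) (P V F : Finset α)
    (slices : α → Finset (Finset α))
    (hVP : V ⊆ P) (hF : F.card ≤ f)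
    (hcorrect : (V \ F).card ≥ 2 * f + 1)
    (hsink : ∀ i ∈ V, slices i = Finset.powersetCard ((V.card + f + 1 + 1) / 2) V)
    (hnonsink : ∀ i ∈ P \ V,
      (∀ S ∈ slices i, S ⊆ V ∧ S.card = f + 1) ∧ ∃ S ∈ slices i, S ⊆ V \ F) :
    ∀ i ∈ P, i ∉ F →
      ∃ Q : Finset α, i ∈ Q ∧ Q ⊆ P \ F ∧ IsQuorum slices Q := by
  intro i hiP hiF
  have hcorrectQuorum : IsQuorum slices (V \ F) :=
    isQuorum_of_forall_slices_eq_powersetCard Finset.sdiff_subset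
      (threshold_le_card_sdiff hF hcorrect) fun j hj => hsink j (Finset.mem_sdiff.1 hj).1
  have hslice : ∃ S ∈ slices i, S ⊆ V \ F := by
    by_cases hiV : i ∈ V
    · exact hcorrectQuorum i (Finset.mem_sdiff.2 ⟨hiV, hiF⟩)
    · exact (hnonsink i (Finset.mem_sdiff.2 ⟨hiP, hiV⟩)).2
  refine ⟨insert i (V \ F), Finset.mem_insert_self _ _, ?_, hcorrectQuorum.insert hslice⟩
  exact Finset.insert_subset (Finset.mem_sdiff.2 ⟨hiP, hiF⟩)
    (Finset.sdiff_subset_sdiff hVP le_rfl)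

theorem stmt_9 {α : Type*} [DecidableEq α] (f : ℕ) (P V F : Finset α)
    (slices : α → Finset (Finset α))
    (hVP : V ⊆ P) (hFP : F ⊆ P) (hF : F.card ≤ f)
    (hcorrect : (V \ F).card ≥ 2 * f + 1)
    (hsink : ∀ i ∈ V, slices i = Finset.powersetCard ((V.card + f + 1 + 1) / 2) V)
    (hnonsink : ∀ i ∈ P \ V,
      (∀ S ∈ slices i, S ⊆ V ∧ S.card = f + 1) ∧ ∃ S ∈ slices i, S ⊆ V \ F) :
    ∀ i ∈ P, i ∉ F →
      ∃ Q : Finset α, i ∈ Q ∧ Q ⊆ P \ F ∧ IsQuorum slices Q :=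
  stmt_9_general f P V F slices hVP hF hcorrect hsink hnonsink
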